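/- For every n ≥ 1, as identities of polynomials in t: P_n(t) = ∑_{σ ∈ 𝔖_n} t^{dda(σ)}·(1+t^2)^{va(σ)} with the boundary convention σ_0 = σ_{n+1} = n+1, and also P_n(t) = ∑_{σ ∈ 𝔖_n} t^{dda(σ)}·(1+t^2)^{pk(σ)} with the convention σ_0 = σ_{n+1} = 0; moreover Q_n(t) = ∑_{σ ∈ 𝔖_n} t^{dda(σ)}·(1+t^2)^{va(σ)} with the convention σ_0 = 0, σ_{n+1} = n+1, and R_n(t) = ∑_{σ ∈ 𝔖_{n+1}} t^{dda(σ)}·(1+t^2)^{va(σ)} with the convention σ_0 = σ_{n+2} = 0 (the last two identities also hold for n = 0). -/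

import Mathlib

open Polynomial

/-- The derivative polynomials `P_n`: `P_0 = t`, `P_{n+1} = (1+t²)·P_n'`. -/
noncomputable def polyP : ℕ → Polynomial ℝ
  | 0 => X
  | n + 1 => (1 + X ^ 2) * derivative (polyP n)

/-- The derivative polynomials `Q_n^{(a)}`:
`Q_0^{(a)} = 1`, `Q_{n+1}^{(a)} = (1+t²)·(Q_n^{(a)})' + a·t·Q_n^{(a)}`;
`Q_n = Q_n^{(1)}` and `R_n = Q_n^{(2)}`. -/
noncomputable def polyQ (a : ℝ) : ℕ → Polynomial ℝ
  | 0 => 1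
  | n + 1 => (1 + X ^ 2) * derivative (polyQ a n) + C a * X * polyQ a n

/-- The sequence `σ₀, σ₁, …, σₙ, σ_{n+1}` of values of a permutation `σ` of `{1,…,n}`
(realized as a permutation of `Fin n`, with `σᵢ = σ(i-1)+1` for `1 ≤ i ≤ n`), with
prescribed boundary values `σ₀ = b0` and `σ_{n+1} = bend`. -/
def extSeq (n : ℕ) (σ : Equiv.Perm (Fin n)) (b0 bend : ℕ) (i : ℕ) : ℕ :=
  if h : 1 ≤ i ∧ i ≤ n then (σ ⟨i - 1, by omega⟩ : Fin n).val + 1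
  else if i = 0 then b0 else bend

/-- The number of valleys of `σ`: indices `1 ≤ i ≤ n` with `σ_{i-1} > σᵢ < σ_{i+1}`. -/
def va (n : ℕ) (σ : Equiv.Perm (Fin n)) (b0 bend : ℕ) : ℕ :=
  ((Finset.Icc 1 n).filter fun i =>
    extSeq n σ b0 bend i < extSeq n σ b0 bend (i - 1) ∧
    extSeq n σ b0 bend i < extSeq n σ b0 bend (i + 1)).card

/-- The number of peaks of `σ`: indices `1 ≤ i ≤ n` with `σ_{i-1} < σᵢ > σ_{i+1}`. -/
def pk (n : ℕ) (σ : Equiv.Perm (Fin n)) (b0 bend : ℕ) : ℕ :=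
  ((Finset.Icc 1 n).filter fun i =>
    extSeq n σ b0 bend (i - 1) < extSeq n σ b0 bend i ∧
    extSeq n σ b0 bend (i + 1) < extSeq n σ b0 bend i).card

/-- The number of double descents plus double ascents of `σ`: indices `1 ≤ i ≤ n` with
`σ_{i-1} > σᵢ > σ_{i+1}` or `σ_{i-1} < σᵢ < σ_{i+1}`. -/
def dda (n : ℕ) (σ : Equiv.Perm (Fin n)) (b0 bend : ℕ) : ℕ :=
  ((Finset.Icc 1 n).filter fun i =>
    (extSeq n σ b0 bend (i + 1) < extSeq n σ b0 bend i ∧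
      extSeq n σ b0 bend i < extSeq n σ b0 bend (i - 1)) ∨
    (extSeq n σ b0 bend (i - 1) < extSeq n σ b0 bend i ∧
      extSeq n σ b0 bend i < extSeq n σ b0 bend (i + 1))).card

/-!
Give `σ` the left boundary `σ₀ = 0` and record it by its ascent word `u`, where `u j` says whether
`σⱼ < σⱼ₊₁` (`0 ≤ j ≤ n`). A valley at `i` is the letter pair `(u (i-1), u i) = (false, true)`, a
peak is `(true, false)` and a double ascent or descent is a pair of equal letters. Every permutation
of `n + 1` letters arises exactly once by inserting the value `n + 1` into one of the `n + 1` slots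
of a permutation of `n` letters. Inserting it into one of the `dda` slots adjacent to a double
turns that double into a peak and a valley; any other slot creates one more double. So with
`d = dda` and `v = va` the monomial `t^d (1+t²)^v` is replaced by
`d·t^(d-1)(1+t²)^(v+1) + (2v + a)·t^(d+1)(1+t²)^v = (1+t²)·D(t^d (1+t²)^v) + a·t·t^d (1+t²)^v`,
where `a = 1` if `σₙ₊₁ = n + 1` and `a = 2` if `σₙ₊₁ = 0`. This is the recurrence of `Q_n` and
`R_n`. Then `P_(n+1) = (1+t²)·R_n`, and `pk = va + 1` when both boundaries are `0`. Finally the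
complement `σᵢ ↦ n + 1 - σᵢ` exchanges the boundary values `0` and `n + 1`, and also exchanges
valleys with peaks.
-/

open Finset Polynomial Equiv

section

variable {R : Type*} [CommSemiring R]

lemma derivative_one_add_X_sq : derivative (1 + X ^ 2 : R[X]) = 2 * X := by
  simp only [derivative_add, derivative_one, derivative_X_pow, zero_add, Nat.cast_ofNat, map_ofNat]
  ring

lemma one_add_X_sq_mul_derivative (d v : ℕ) :
    (1 + X ^ 2 : R[X]) * derivative (X ^ d * (1 + X ^ 2) ^ v)
      = d • (X ^ (d - 1) * (1 + X ^ 2) ^ (v + 1)) + (2 * v) • (X ^ (d + 1) * (1 + X ^ 2) ^ v) := by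
  rw [derivative_mul, derivative_X_pow, derivative_pow, derivative_one_add_X_sq]
  rcases d with _ | d <;> rcases v with _ | v
  all_goals simp only [nsmul_eq_mul, C_eq_natCast, Nat.add_sub_cancel]
  all_goals push_cast
  all_goals ring

end

namespace AscentWord

def pairSum (g : Bool → Bool → ℕ) (u : ℕ → Bool) (m : ℕ) : ℕ :=
  ∑ i ∈ Icc 1 m, g (u (i - 1)) (u i)

def doubleCount (u : ℕ → Bool) (m : ℕ) : ℕ := pairSum (fun a b => (a == b).toNat) u m

def valleyCount (u : ℕ → Bool) (m : ℕ) : ℕ := pairSum (fun a b => (!a && b).toNat) u m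

def peakCount (u : ℕ → Bool) (m : ℕ) : ℕ := pairSum (fun a b => (a && !b).toNat) u m

variable {g : Bool → Bool → ℕ} {u u' : ℕ → Bool} {m k : ℕ}

@[simp]
lemma pairSum_zero : pairSum g u 0 = 0 := by
  simp [pairSum]

lemma pairSum_succ : pairSum g u (m + 1) = pairSum g u m + g (u m) (u (m + 1)) := by
  rw [pairSum, sum_Icc_succ_top (by omega), Nat.add_sub_cancel, pairSum]

lemma pairSum_congr (h : ∀ j ≤ m, u j = u' j) : pairSum g u m = pairSum g u' m :=
  sum_congr rfl fun i hi => by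
    rw [mem_Icc] at hi
    rw [h (i - 1) (by omega), h i hi.2]

lemma doubleCount_add_valleyCount_add_peakCount (u : ℕ → Bool) (m : ℕ) :
    doubleCount u m + valleyCount u m + peakCount u m = m := by
  induction m with
  | zero => simp [doubleCount, valleyCount, peakCount]
  | succ m ih =>
    simp only [doubleCount, valleyCount, peakCount, pairSum_succ] at ih ⊢
    cases u m <;> cases u (m + 1) <;> simp <;> omega

lemma valleyCount_add_toNat (u : ℕ → Bool) (m : ℕ) :
    valleyCount u m + (u 0).toNat = peakCount u m + (u m).toNat := by
  induction m with
  | zero => simp [valleyCount, peakCount]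
  | succ m ih =>
    simp only [valleyCount, peakCount, pairSum_succ] at ih ⊢
    cases hm : u m <;> cases hm' : u (m + 1) <;> simp [hm] at ih ⊢ <;> omega

/-- The ascent word after inserting a new maximum between positions `k` and `k + 1`: the letter
`u k` becomes an ascent followed by a descent. At `k = m` the last letter `u m` stays (the right
boundary lies above or below every value) and the new ascent is put in front of it. -/
def insertMax (m k : ℕ) (u : ℕ → Bool) (j : ℕ) : Bool :=
  if j < k then u j else if j = k then true else if j = k + 1 ∧ k < m then false else u (j - 1)

lemma insertMax_of_lt {j : ℕ} (h : j < k) : insertMax m k u j = u j := by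
  simp [insertMax, h]

@[simp]
lemma insertMax_self : insertMax m k u k = true := by
  simp [insertMax]

lemma insertMax_succ_self (h : k < m) : insertMax m k u (k + 1) = false := by
  simp [insertMax, h]

lemma insertMax_of_succ_lt {j : ℕ} (h : k + 1 < j) : insertMax m k u j = u (j - 1) := by
  simp [insertMax, show ¬ j < k by omega, show j ≠ k by omega, show j ≠ k + 1 by omega]

lemma insertMax_self_succ : insertMax m m u (m + 1) = u m := by
  simp [insertMax]

lemma insertMax_succ (h : k < m) : insertMax (m + 1) k u = insertMax m k u := by
  ext j
  simp only [insertMax]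
  split_ifs <;> first | rfl | omega

lemma pairSum_insertMax_prefix (h0 : u 0 = true) :
    pairSum g (insertMax m k u) k + g (u (k - 1)) (u k)
      = pairSum g u k + g (u (k - 1)) true := by
  cases k with
  | zero => simp [h0]
  | succ k =>
    have hprefix : pairSum g (insertMax m (k + 1) u) k = pairSum g u k :=
      pairSum_congr fun j hj => insertMax_of_lt (by omega)
    rw [pairSum_succ, pairSum_succ, hprefix, insertMax_of_lt (by omega), insertMax_self,
      Nat.add_sub_cancel]
    ring

lemma pairSum_insertMax_of_lt (h0 : u 0 = true) (hk : k < m) :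
    pairSum g (insertMax m k u) (m + 1) + g (u (k - 1)) (u k) + g (u k) (u (k + 1))
      = pairSum g u m + g (u (k - 1)) true + g true false + g false (u (k + 1)) := by
  induction m, hk using Nat.le_induction with
  | base =>
    simp only [Nat.succ_eq_add_one]
    have := pairSum_insertMax_prefix (g := g) (m := k + 1) (k := k) h0
    rw [pairSum_succ (m := k + 1), pairSum_succ (m := k), pairSum_succ (u := u) (m := k),
      insertMax_self, insertMax_succ_self (by omega),
      insertMax_of_succ_lt (by omega), Nat.add_sub_cancel]
    omega
  | succ m hkm ih =>
    rw [insertMax_succ hkm, pairSum_succ (m := m + 1), pairSum_succ (u := u) (m := m),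
      insertMax_of_succ_lt (by omega), insertMax_of_succ_lt (by omega), Nat.add_sub_cancel,
      Nat.add_sub_cancel]
    omega

lemma pairSum_insertMax_self (h0 : u 0 = true) :
    pairSum g (insertMax m m u) (m + 1) + g (u (m - 1)) (u m)
      = pairSum g u m + g (u (m - 1)) true + g true (u m) := by
  have := pairSum_insertMax_prefix (g := g) (m := m) (k := m) h0
  rw [pairSum_succ, insertMax_self, insertMax_self_succ]
  omega

/-- Slots next to a double ascent or a double descent: inserting there turns the double into a peak
followed by a valley. -/
def splitsDouble (u : ℕ → Bool) (k : ℕ) : Bool :=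
  u k && u (k + 1) || !u k && !u (k - 1)

lemma sum_splitsDouble (h0 : u 0 = true) (m : ℕ) :
    ∑ k ∈ range (m + 1), (splitsDouble u k).toNat = doubleCount u m + (u m && u (m + 1)).toNat := by
  induction m with
  | zero => cases h1 : u 1 <;> simp [splitsDouble, doubleCount, h0, h1]
  | succ m ih =>
    rw [sum_range_succ, ih]
    simp only [doubleCount, pairSum_succ, splitsDouble, Nat.add_sub_cancel]
    cases u m <;> cases u (m + 1) <;> cases u (m + 2) <;> simp

lemma counts_insertMax (h0 : u 0 = true) (hlast : u (m + 1) = false) (hk : k ≤ m) :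
    if splitsDouble u k then
      doubleCount (insertMax m k u) (m + 1) + 1 = doubleCount u m ∧
        valleyCount (insertMax m k u) (m + 1) = valleyCount u m + 1
    else
      doubleCount (insertMax m k u) (m + 1) = doubleCount u m + 1 ∧
        valleyCount (insertMax m k u) (m + 1) = valleyCount u m := by
  unfold doubleCount valleyCount splitsDouble
  rcases hk.lt_or_eq with hk | rfl
  · have hd := pairSum_insertMax_of_lt (g := fun a b => (a == b).toNat) h0 hk
    have hv := pairSum_insertMax_of_lt (g := fun a b => (!a && b).toNat) h0 hk
    cases h1 : u (k - 1) <;> cases h2 : u k <;> cases h3 : u (k + 1) <;>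
      simp [h1, h2, h3] at hd hv ⊢ <;> omega
  · have hd := pairSum_insertMax_self (g := fun a b => (a == b).toNat) (m := k) h0
    have hv := pairSum_insertMax_self (g := fun a b => (!a && b).toNat) (m := k) h0
    rw [hlast]
    cases h1 : u (k - 1) <;> cases h2 : u k <;> simp [h1, h2] at hd hv ⊢ <;> omega

variable (R : Type*) [CommSemiring R] in
noncomputable def weight (u : ℕ → Bool) (m : ℕ) : R[X] :=
  X ^ doubleCount u m * (1 + X ^ 2) ^ valleyCount u m

variable {R : Type*} [CommSemiring R]

lemma weight_congr (h : ∀ j ≤ m, u j = u' j) : weight R u m = weight R u' m := by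
  simp only [weight, doubleCount, valleyCount, pairSum_congr h]

lemma weight_insertMax (h0 : u 0 = true) (hlast : u (m + 1) = false) (hk : k ≤ m) :
    weight R (insertMax m k u) (m + 1) =
      if splitsDouble u k then X ^ (doubleCount u m - 1) * (1 + X ^ 2) ^ (valleyCount u m + 1)
      else X ^ (doubleCount u m + 1) * (1 + X ^ 2) ^ valleyCount u m := by
  have hcounts := counts_insertMax h0 hlast hk
  split_ifs at hcounts ⊢ with hsplit
  · rw [weight, hcounts.2, ← hcounts.1, Nat.add_sub_cancel]
  · rw [weight, hcounts.1, hcounts.2]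

theorem sum_weight_insertMax (h0 : u 0 = true) (hlast : u (m + 1) = false) :
    ∑ k ∈ range (m + 1), weight R (insertMax m k u) (m + 1) =
      (1 + X ^ 2) * derivative (weight R u m) + (bif u m then 1 else 2) * X * weight R u m := by
  have hsplit : #{k ∈ range (m + 1) | splitsDouble u k} = doubleCount u m := by
    have := sum_splitsDouble h0 m
    simp only [hlast, Bool.and_false, Bool.toNat_false, add_zero] at this
    rw [card_filter, ← this]
    exact sum_congr rfl fun k _ => by cases splitsDouble u k <;> rfl
  have hrest :
      #{k ∈ range (m + 1) | ¬splitsDouble u k} = 2 * valleyCount u m + (bif u m then 1 else 2) := by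
    have htotal := card_filter_add_card_filter_not (s := range (m + 1))
      (fun k => splitsDouble u k = true)
    have hsum := doubleCount_add_valleyCount_add_peakCount u m
    have htel := valleyCount_add_toNat u m
    rw [card_range, hsplit] at htotal
    rw [h0] at htel
    cases hm : u m <;> simp only [hm, Bool.toNat_true, Bool.toNat_false, cond_true, cond_false]
      at htel ⊢ <;> omega
  rw [sum_congr rfl fun k hk => weight_insertMax h0 hlast (Nat.lt_succ_iff.mp (mem_range.mp hk)),
    sum_ite, sum_const, sum_const, hsplit, hrest, weight, one_add_X_sq_mul_derivative]
  cases u m <;> simp only [cond_true, cond_false] <;> push_cast [add_smul, nsmul_eq_mul] <;> ring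

end AscentWord

/-- The right boundary value `σₙ₊₁`: above every value (`n + 1`) or below every value (`0`). -/
def rightEnd (n : ℕ) (up : Bool) : ℕ := bif up then n + 1 else 0

section ExtSeq

variable {n : ℕ} (σ : Perm (Fin n)) {b0 bend i j : ℕ}

@[simp]
lemma extSeq_zero : extSeq n σ b0 bend 0 = b0 := by
  simp [extSeq]

lemma extSeq_of_lt (h : n < i) : extSeq n σ b0 bend i = bend := by
  simp [extSeq, show ¬ i ≤ n by omega, show i ≠ 0 by omega]

lemma extSeq_mem (h1 : 1 ≤ i) (h2 : i ≤ n) :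
    1 ≤ extSeq n σ b0 bend i ∧ extSeq n σ b0 bend i ≤ n := by
  rw [extSeq, dif_pos ⟨h1, h2⟩]
  omega

lemma extSeq_le (hi : i ≤ n) : extSeq n σ 0 bend i ≤ n := by
  rcases Nat.eq_zero_or_pos i with rfl | hi0
  · simp
  · exact (extSeq_mem σ hi0 hi).2

lemma extSeq_injOn (hi : 1 ≤ i ∧ i ≤ n) (hj : 1 ≤ j ∧ j ≤ n)
    (h : extSeq n σ b0 bend i = extSeq n σ b0 bend j) : i = j := by
  rw [extSeq, dif_pos hi, extSeq, dif_pos hj, Nat.add_right_cancel_iff, Fin.val_inj,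
    σ.injective.eq_iff, Fin.mk.injEq] at h
  omega

end ExtSeq

lemma decide_lt_rightEnd {n x : ℕ} {up : Bool} (hx : x ≤ n) : decide (x < rightEnd n up) = up := by
  cases up <;> simp [rightEnd]
  omega

def ascentWord (n : ℕ) (σ : Perm (Fin n)) (up : Bool) (j : ℕ) : Bool :=
  decide (extSeq n σ 0 (rightEnd n up) j < extSeq n σ 0 (rightEnd n up) (j + 1))

section PermAscentWord

variable {n : ℕ} (σ : Perm (Fin n)) {up : Bool} {j : ℕ}

lemma extSeq_ne_extSeq_succ (h : up = true ∨ 0 < n) (hj : j ≤ n) :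
    extSeq n σ 0 (rightEnd n up) j ≠ extSeq n σ 0 (rightEnd n up) (j + 1) := by
  rcases Nat.eq_zero_or_pos j with rfl | hj0
  · rcases Nat.eq_zero_or_pos n with rfl | hn
    · rcases h with rfl | h
      · simp [extSeq_of_lt, rightEnd]
      · omega
    · have := extSeq_mem σ (b0 := 0) (bend := rightEnd n up) (i := 1) le_rfl hn
      simp only [extSeq_zero, zero_add]
      omega
  · rcases hj.lt_or_eq with hj | rfl
    · intro hij
      have := extSeq_injOn σ ⟨hj0, hj.le⟩ ⟨by omega, hj⟩ hij
      omega
    · have := extSeq_mem σ (b0 := 0) (bend := rightEnd j up) hj0 le_rfl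
      rw [extSeq_of_lt σ (Nat.lt_succ_self j)]
      cases up <;> simp only [rightEnd, cond_true, cond_false] at this ⊢ <;> omega

lemma extSeq_lt_extSeq_succ_iff :
    extSeq n σ 0 (rightEnd n up) j < extSeq n σ 0 (rightEnd n up) (j + 1) ↔
      ascentWord n σ up j = true :=
  decide_eq_true_iff.symm

lemma extSeq_succ_lt_extSeq_iff (h : up = true ∨ 0 < n) (hj : j ≤ n) :
    extSeq n σ 0 (rightEnd n up) (j + 1) < extSeq n σ 0 (rightEnd n up) j ↔
      ascentWord n σ up j = false := by
  have := extSeq_ne_extSeq_succ σ h hj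
  rw [ascentWord, decide_eq_false_iff_not]
  omega

lemma ascentWord_zero (h : up = true ∨ 0 < n) : ascentWord n σ up 0 = true := by
  have := extSeq_ne_extSeq_succ σ h (Nat.zero_le n)
  simp only [ascentWord, extSeq_zero, decide_eq_true_eq] at this ⊢
  omega

lemma ascentWord_self : ascentWord n σ up n = up := by
  rw [ascentWord, extSeq_of_lt σ (Nat.lt_succ_self n), decide_lt_rightEnd (extSeq_le σ le_rfl)]

lemma ascentWord_succ_self : ascentWord n σ up (n + 1) = false := by
  simp [ascentWord, extSeq_of_lt]

lemma dda_eq_doubleCount (h : up = true ∨ 0 < n) :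
    dda n σ 0 (rightEnd n up) = AscentWord.doubleCount (ascentWord n σ up) n := by
  rw [dda, card_filter, AscentWord.doubleCount, AscentWord.pairSum]
  refine sum_congr rfl fun i hi => ?_
  obtain ⟨j, rfl⟩ : ∃ j, i = j + 1 := ⟨i - 1, by rw [mem_Icc] at hi; omega⟩
  rw [mem_Icc] at hi
  simp only [Nat.add_sub_cancel, extSeq_lt_extSeq_succ_iff,
    extSeq_succ_lt_extSeq_iff σ h (j := j) (by omega), extSeq_succ_lt_extSeq_iff σ h hi.2]
  cases ascentWord n σ up j <;> cases ascentWord n σ up (j + 1) <;> rfl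

lemma va_eq_valleyCount (h : up = true ∨ 0 < n) :
    va n σ 0 (rightEnd n up) = AscentWord.valleyCount (ascentWord n σ up) n := by
  rw [va, card_filter, AscentWord.valleyCount, AscentWord.pairSum]
  refine sum_congr rfl fun i hi => ?_
  obtain ⟨j, rfl⟩ : ∃ j, i = j + 1 := ⟨i - 1, by rw [mem_Icc] at hi; omega⟩
  rw [mem_Icc] at hi
  simp only [Nat.add_sub_cancel, extSeq_lt_extSeq_succ_iff,
    extSeq_succ_lt_extSeq_iff σ h (j := j) (by omega)]
  cases ascentWord n σ up j <;> cases ascentWord n σ up (j + 1) <;> rfl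

lemma pk_eq_peakCount (h : up = true ∨ 0 < n) :
    pk n σ 0 (rightEnd n up) = AscentWord.peakCount (ascentWord n σ up) n := by
  rw [pk, card_filter, AscentWord.peakCount, AscentWord.pairSum]
  refine sum_congr rfl fun i hi => ?_
  obtain ⟨j, rfl⟩ : ∃ j, i = j + 1 := ⟨i - 1, by rw [mem_Icc] at hi; omega⟩
  rw [mem_Icc] at hi
  simp only [Nat.add_sub_cancel, extSeq_lt_extSeq_succ_iff, extSeq_succ_lt_extSeq_iff σ h hi.2]
  cases ascentWord n σ up j <;> cases ascentWord n σ up (j + 1) <;> rfl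

end PermAscentWord

lemma Fin.insertNth_injective {α : Type*} {n : ℕ} {i : Fin (n + 1)} {x : α} {p : Fin n → α}
    (hp : Function.Injective p) (hx : x ∉ Set.range p) :
    Function.Injective (Fin.insertNth i x p) := by
  intro a b hab
  induction a using Fin.succAboveCases i <;> induction b using Fin.succAboveCases i <;>
    simp_all [hp.eq_iff]

namespace Equiv.Perm

variable {m : ℕ}

noncomputable def insertMax (σ : Perm (Fin m)) (k : Fin (m + 1)) : Perm (Fin (m + 1)) :=
  Equiv.ofBijective (Fin.insertNth k (Fin.last m) (Fin.castSucc ∘ σ))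
    (Finite.injective_iff_bijective.mp <| Fin.insertNth_injective
      (Fin.castSucc_injective m |>.comp σ.injective) (by simp))

lemma insertMax_apply_self (σ : Perm (Fin m)) (k : Fin (m + 1)) : σ.insertMax k k = Fin.last m := by
  simp [insertMax]

lemma insertMax_apply_succAbove (σ : Perm (Fin m)) (k : Fin (m + 1)) (i : Fin m) :
    σ.insertMax k (k.succAbove i) = (σ i).castSucc := by
  simp [insertMax]

lemma insertMax_bijective :
    Function.Bijective fun p : Fin (m + 1) × Perm (Fin m) => p.2.insertMax p.1 := by
  rw [Fintype.bijective_iff_injective_and_card]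
  refine ⟨fun ⟨k, σ⟩ ⟨k', σ'⟩ h => ?_, by simp [Fintype.card_perm, Nat.factorial_succ]⟩
  simp only at h
  obtain rfl : k = k' := (σ'.insertMax k').injective <| by
    rw [insertMax_apply_self σ' k', ← h, insertMax_apply_self σ k]
  simp only [Prod.mk.injEq, true_and]
  exact Equiv.ext fun i => Fin.castSucc_injective m <| by
    rw [← insertMax_apply_succAbove, h, insertMax_apply_succAbove]

lemma sum_perm_succ {M : Type*} [AddCommMonoid M] (F : Perm (Fin (m + 1)) → M) :
    ∑ τ, F τ = ∑ σ : Perm (Fin m), ∑ k, F (σ.insertMax k) := by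
  rw [← Fintype.sum_bijective _ insertMax_bijective _ F (fun _ => rfl), Fintype.sum_prod_type,
    Finset.sum_comm]

end Equiv.Perm

section InsertMax

variable {m : ℕ} (σ : Perm (Fin m)) (k : Fin (m + 1)) {b0 b b' j : ℕ}

lemma extSeq_insertMax_of_le (hj : j ≤ k) :
    extSeq (m + 1) (σ.insertMax k) b0 b' j = extSeq m σ b0 b j := by
  rcases Nat.eq_zero_or_pos j with rfl | hj0
  · simp
  have hk := k.isLt
  have hpos : (⟨j - 1, by omega⟩ : Fin (m + 1)) = k.succAbove ⟨j - 1, by omega⟩ := by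
    rw [Fin.succAbove_of_castSucc_lt _ _ (by rw [Fin.lt_def]; simp; omega)]
    rfl
  rw [extSeq, dif_pos ⟨hj0, by omega⟩, extSeq, dif_pos ⟨hj0, by omega⟩, hpos,
    Perm.insertMax_apply_succAbove, Fin.val_castSucc]

lemma extSeq_insertMax_succ : extSeq (m + 1) (σ.insertMax k) b0 b' (k + 1) = m + 1 := by
  have hpos : (⟨k + 1 - 1, by omega⟩ : Fin (m + 1)) = k := Fin.ext (by simp)
  rw [extSeq, dif_pos ⟨by omega, by omega⟩, hpos, Perm.insertMax_apply_self, Fin.val_last]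

lemma extSeq_insertMax_of_lt (hkj : k + 1 < j) (hj : j ≤ m + 1) :
    extSeq (m + 1) (σ.insertMax k) b0 b' j = extSeq m σ b0 b (j - 1) := by
  have hpos : (⟨j - 1, by omega⟩ : Fin (m + 1)) = k.succAbove ⟨j - 2, by omega⟩ := by
    rw [Fin.succAbove_of_le_castSucc _ _ (by rw [Fin.le_def]; simp; omega)]
    ext; simp; omega
  rw [extSeq, dif_pos ⟨by omega, hj⟩, extSeq, dif_pos ⟨by omega, by omega⟩, hpos,
    Perm.insertMax_apply_succAbove, Fin.val_castSucc]
  congr 3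

lemma ascentWord_insertMax {up : Bool} (hj : j ≤ m + 1) :
    ascentWord (m + 1) (σ.insertMax k) up j = AscentWord.insertMax m k (ascentWord m σ up) j := by
  have hk := k.isLt
  rcases lt_trichotomy j k with hjk | rfl | hjk
  · rw [AscentWord.insertMax_of_lt hjk, ascentWord, ascentWord,
      extSeq_insertMax_of_le σ k hjk.le, extSeq_insertMax_of_le σ k hjk]
  · have := extSeq_le σ (bend := rightEnd m up) (Nat.lt_succ_iff.mp hk)
    rw [AscentWord.insertMax_self, ascentWord,
      extSeq_insertMax_of_le σ k le_rfl (b := rightEnd m up), extSeq_insertMax_succ,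
      decide_eq_true_iff]
    omega
  obtain rfl | hjk := (show (k : ℕ) + 1 ≤ j by omega).eq_or_lt
  · obtain hkm | hkm := (Nat.lt_succ_iff.mp hk).lt_or_eq
    · have := extSeq_le σ (bend := rightEnd m up) (i := k + 1) hkm
      rw [AscentWord.insertMax_succ_self hkm, ascentWord, extSeq_insertMax_succ,
        extSeq_insertMax_of_lt σ k (b := rightEnd m up) (by omega) (by omega),
        decide_eq_false_iff_not, Nat.add_sub_cancel]
      omega
    · rw [ascentWord, extSeq_insertMax_succ, extSeq_of_lt _ (by omega), hkm,
        AscentWord.insertMax_self_succ, ascentWord_self, decide_lt_rightEnd le_rfl]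
  rw [AscentWord.insertMax_of_succ_lt hjk, ascentWord,
    extSeq_insertMax_of_lt σ k (b := rightEnd m up) hjk hj]
  obtain hjm | rfl := hj.lt_or_eq
  · rw [extSeq_insertMax_of_lt σ k (b := rightEnd m up) (by omega) hjm, ascentWord,
      Nat.succ_sub_one, Nat.sub_add_cancel (by omega)]
  · rw [extSeq_of_lt (σ.insertMax k) (i := m + 1 + 1) (by omega), Nat.add_sub_cancel,
      ascentWord_self,
      decide_lt_rightEnd (by have := extSeq_le σ (bend := rightEnd m up) le_rfl; omega)]

end InsertMax

noncomputable def valleyPoly (n : ℕ) (up : Bool) : ℝ[X] :=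
  ∑ σ : Perm (Fin n), X ^ dda n σ 0 (rightEnd n up) * (1 + X ^ 2) ^ va n σ 0 (rightEnd n up)

lemma valleyPoly_eq_sum_weight {n : ℕ} {up : Bool} (h : up = true ∨ 0 < n) :
    valleyPoly n up = ∑ σ, AscentWord.weight ℝ (ascentWord n σ up) n := by
  simp only [valleyPoly, AscentWord.weight, dda_eq_doubleCount _ h, va_eq_valleyCount _ h]

lemma sum_weight_ascentWord_insertMax {m : ℕ} {up : Bool} (h : up = true ∨ 0 < m)
    (σ : Perm (Fin m)) :
    ∑ k, AscentWord.weight ℝ (ascentWord (m + 1) (σ.insertMax k) up) (m + 1) =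
      (1 + X ^ 2) * derivative (AscentWord.weight ℝ (ascentWord m σ up) m)
        + C (bif up then 1 else 2) * X * AscentWord.weight ℝ (ascentWord m σ up) m := by
  have hword (k : Fin (m + 1)) :
      AscentWord.weight ℝ (ascentWord (m + 1) (σ.insertMax k) up) (m + 1) =
        AscentWord.weight ℝ (AscentWord.insertMax m k (ascentWord m σ up)) (m + 1) :=
    AscentWord.weight_congr fun j hj => ascentWord_insertMax σ k hj
  rw [sum_congr rfl fun k _ => hword k,
    Fin.sum_univ_eq_sum_range (fun k => AscentWord.weight ℝ
      (AscentWord.insertMax m k (ascentWord m σ up)) (m + 1)),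
    AscentWord.sum_weight_insertMax (ascentWord_zero σ h) (ascentWord_succ_self σ), ascentWord_self]
  cases up <;> simp [C_ofNat]

theorem valleyPoly_succ {m : ℕ} {up : Bool} (h : up = true ∨ 0 < m) :
    valleyPoly (m + 1) up =
      (1 + X ^ 2) * derivative (valleyPoly m up)
        + C (bif up then 1 else 2) * X * valleyPoly m up := by
  rw [valleyPoly_eq_sum_weight (Or.inr m.succ_pos), Perm.sum_perm_succ,
    sum_congr rfl fun σ _ => sum_weight_ascentWord_insertMax h σ, valleyPoly_eq_sum_weight h,
    sum_add_distrib, ← mul_sum, ← mul_sum, derivative_sum]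

theorem polyQ_one_eq_valleyPoly (n : ℕ) : polyQ 1 n = valleyPoly n true := by
  induction n with
  | zero => simp [polyQ, valleyPoly, dda, va]
  | succ n ih => rw [polyQ, ih, valleyPoly_succ (Or.inl rfl)]; rfl

theorem polyQ_two_eq_valleyPoly (n : ℕ) : polyQ 2 n = valleyPoly (n + 1) false := by
  induction n with
  | zero =>
    have h : false = true ∨ 0 < 1 := Or.inr one_pos
    simp [polyQ, valleyPoly_eq_sum_weight h, AscentWord.weight, AscentWord.doubleCount,
      AscentWord.valleyCount, AscentWord.pairSum_succ, ascentWord_zero _ h, ascentWord_self]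
  | succ n ih => rw [polyQ, ih, valleyPoly_succ (Or.inr n.succ_pos)]; rfl

lemma polyP_succ (n : ℕ) : polyP (n + 1) = (1 + X ^ 2) * polyQ 2 n := by
  induction n with
  | zero => simp [polyP, polyQ]
  | succ n ih =>
    rw [polyP, ih, polyQ, derivative_mul, derivative_one_add_X_sq, C_ofNat]
    ring

lemma pk_eq_va_add_one {m : ℕ} (σ : Perm (Fin (m + 1))) :
    pk (m + 1) σ 0 0 = va (m + 1) σ 0 0 + 1 := by
  have h : false = true ∨ 0 < m + 1 := Or.inr m.succ_pos
  have htel := AscentWord.valleyCount_add_toNat (ascentWord (m + 1) σ false) (m + 1)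
  rw [ascentWord_zero σ h, ascentWord_self] at htel
  change pk (m + 1) σ 0 (rightEnd (m + 1) false) = va (m + 1) σ 0 (rightEnd (m + 1) false) + 1
  rw [pk_eq_peakCount σ h, va_eq_valleyCount σ h]
  simpa using htel.symm

theorem polyP_eq_sum_pk (m : ℕ) :
    polyP (m + 1) = ∑ σ : Perm (Fin (m + 1)),
      X ^ dda (m + 1) σ 0 0 * (1 + X ^ 2) ^ pk (m + 1) σ 0 0 := by
  rw [polyP_succ, polyQ_two_eq_valleyPoly, valleyPoly, mul_sum]
  refine sum_congr rfl fun σ _ => ?_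
  rw [pk_eq_va_add_one, pow_succ]
  simp only [rightEnd, cond_false]
  ring

lemma extSeq_revPerm_mul_add {n : ℕ} (σ : Perm (Fin n)) (i : ℕ) :
    extSeq n (Fin.revPerm * σ) 0 0 i + extSeq n σ (n + 1) (n + 1) i = n + 1 := by
  unfold extSeq
  split_ifs
  · have := (σ ⟨i - 1, by omega⟩).isLt
    simp only [Perm.mul_apply, Fin.revPerm_apply, Fin.val_rev]
    omega
  · simp
  · simp

lemma dda_revPerm_mul {n : ℕ} (σ : Perm (Fin n)) :
    dda n (Fin.revPerm * σ) 0 0 = dda n σ (n + 1) (n + 1) := by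
  unfold dda
  congr 1
  refine filter_congr fun i _ => ?_
  have := extSeq_revPerm_mul_add σ (i - 1)
  have := extSeq_revPerm_mul_add σ i
  have := extSeq_revPerm_mul_add σ (i + 1)
  omega

lemma pk_revPerm_mul {n : ℕ} (σ : Perm (Fin n)) :
    pk n (Fin.revPerm * σ) 0 0 = va n σ (n + 1) (n + 1) := by
  unfold pk va
  congr 1
  refine filter_congr fun i _ => ?_
  have := extSeq_revPerm_mul_add σ (i - 1)
  have := extSeq_revPerm_mul_add σ i
  have := extSeq_revPerm_mul_add σ (i + 1)
  omega

theorem polyP_eq_sum_va (m : ℕ) :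
    polyP (m + 1) = ∑ σ : Perm (Fin (m + 1)),
      X ^ dda (m + 1) σ (m + 2) (m + 2) * (1 + X ^ 2) ^ va (m + 1) σ (m + 2) (m + 2) := by
  rw [polyP_eq_sum_pk]
  refine (Fintype.sum_equiv (Equiv.mulLeft Fin.revPerm) _ _ fun σ => ?_).symm
  rw [Equiv.coe_mulLeft, dda_revPerm_mul, pk_revPerm_mul]

theorem stmt11 (n : ℕ) :
    (1 ≤ n →
      (polyP n = ∑ σ : Equiv.Perm (Fin n),
        (X : Polynomial ℝ) ^ dda n σ (n + 1) (n + 1) * (1 + X ^ 2) ^ va n σ (n + 1) (n + 1)) ∧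
      (polyP n = ∑ σ : Equiv.Perm (Fin n),
        (X : Polynomial ℝ) ^ dda n σ 0 0 * (1 + X ^ 2) ^ pk n σ 0 0)) ∧
    (polyQ 1 n = ∑ σ : Equiv.Perm (Fin n),
      (X : Polynomial ℝ) ^ dda n σ 0 (n + 1) * (1 + X ^ 2) ^ va n σ 0 (n + 1)) ∧
    (polyQ 2 n = ∑ σ : Equiv.Perm (Fin (n + 1)),
      (X : Polynomial ℝ) ^ dda (n + 1) σ 0 0 * (1 + X ^ 2) ^ va (n + 1) σ 0 0) := by
  refine ⟨fun hn => ?_, polyQ_one_eq_valleyPoly n, polyQ_two_eq_valleyPoly n⟩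
  obtain ⟨m, rfl⟩ := Nat.exists_eq_add_of_le' hn
  exact ⟨polyP_eq_sum_va m, polyP_eq_sum_pk m⟩
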